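/- Let T > 0 and fix constants a, b, 𝔠 > 0, p ≥ 0, κ_α ≥ 0, κ_U > 0, σ_S, σ_α, σ_U > 0, ρ ∈ [−1,1], ρ₀, ρ₁, β₀, β₁ > 0; let f₁, f₂, f₃ : [0,T] → ℝ and V : [0,T] → [0,∞) be continuous with a − b·f₂(t)² > 0 for all t. Define the matrix-valued functions P₇(t) = (a − b f₂²)^{−1/2}·( p/2, b f₁f₂, 0, b f₂f₃ ) (a row 4-vector) and P₈(t) = (2√(a − b f₂²))⁻¹·( 1−f₂, 0, 0, f₂ ), and P₉ = 2P₈ᵀP₇ + P₂ᵀ with P₂ the 4×4 matrix with rows (0,0,0,0), (−f₁,−κ_α,0,f₁), (−1,0,−κ_U,0), (−f₃,0,0,f₃), and P₅ the symmetric 4×4 matrix with rows (−ρ₀−ρ₁V, 1/2, 0, 0), (1/2, b f₁², 0, b f₁f₃), (0,0,𝔠,0), (0, b f₁f₃, 0, b f₃²). Suppose G₂ : [0,T] → ℝ^{4×4} is C¹, symmetric-valued, and solves G₂' = −P₇ᵀP₇ − 4G₂ᵀP₈ᵀP₈G₂ − G₂ᵀP₉ − P₉ᵀG₂ − P₅ with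 G₂(T) = diag(−(β₀+β₁V(T)),0,0,0), and G₀ : [0,T] → ℝ is C¹ with G₀'(t) = −((V(t)+ρσ_Sσ_α)/σ_S)²·(G₂(t))₂₂ − σ_U²·(G₂(t))₃₃ and G₀(T) = 0. Define H(t,s,x,q,m,ξ,r) = x + qs + G₀(t) + ỹ·G₂(t)·ỹᵀ with ỹ = (q, m, ξ, r). Then for all (t,s,x,q,m,ξ,r) ∈ [0,T)×ℝ⁶, H satisfies 0 = ∂ₜH + sup_{ν∈ℝ}[ (pν+m)∂ₛH − ν(s+aν)∂ₓH + η*(s+bη*)∂ₓH + ξ(s+𝔠ξ)∂ₓH + (ν−η*−ξ)∂_qH + η*∂_rH ] − κ_α m ∂_mH − κ_U ξ ∂_ξH + ½σ_S²∂_{ss}H + ½((V(t)+ρσ_Sσ_α)/σ_S)²∂_{mm}H + ½σ_U²∂_{ξξ}H + (V(t)+ρσ_Sσ_α)∂_{sm}H − (ρ₀+ρ₁V(t))q², where η* = η*(ν) = f₁(t)m + f₂(t)ν + f₃(t)r; the supremum is finite and attained uniquely at ν* = (a − b f₂(t)²)^{−1/2}·( P₇(t) + 2P₈(t)G₂(t)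 )·ỹᵀ; H(T,·) = x + qs − (β₀+β₁V(T))q²; and H is bounded by a quadratic growth in (s,x,q,m,ξ,r) uniformly in t. -/

import Mathlib

/-! `H` is affine in `(s, x)` and quadratic in `ỹ = (q, m, ξ, r)`, so with `g = G₂ ỹ` and `G₂`
symmetric its partial derivatives are explicit: `∂ₛH = q`, `∂ₓH = 1`, `∂_qH = s + 2g₀`,
`∂_mH = 2g₁`, `∂_ξH = 2g₂`, `∂_rH = 2g₃`, `∂ₘₘH = 2(G₂)₁₁`, `∂_ξξH = 2(G₂)₂₂`,
`∂ₛₛH = ∂ₛₘH = 0`. The Hamiltonian is then a quadratic in `ν` with leading coefficient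
`-(a - b f₂²) < 0`, and completing the square gives the unique maximiser `ν*` with
`√(a - b f₂²) ν* = (P₇ + 2P₈G₂) ỹᵀ`. The Riccati equation is designed so that
`ỹ G₂' ỹᵀ = -(√(a - b f₂²) ν*)² - 2 ỹ P₂ G₂ ỹᵀ - ỹ P₅ ỹᵀ`: the square cancels the maximal value
of the Hamiltonian, the other two terms cancel its `ν`-free part together with the drift and
running-penalty terms, and `G₀'` cancels the second-order terms. Quadratic growth holds because
`G₀` and `G₂`, being differentiable on `[0, T]`, are bounded there. -/

open Set Matrix

/-! Partial-derivative abbreviations for a function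
`H : ℝ → ℝ → ℝ → ℝ → ℝ → ℝ → ℝ → ℝ` of `(t, s, x, q, m, ξ, r)`. -/

noncomputable def bT (T : ℝ) (H : ℝ → ℝ → ℝ → ℝ → ℝ → ℝ → ℝ → ℝ)
    (t s x q m ξ r : ℝ) : ℝ :=
  derivWithin (fun τ => H τ s x q m ξ r) (Icc 0 T) t

noncomputable def bS (H : ℝ → ℝ → ℝ → ℝ → ℝ → ℝ → ℝ → ℝ) (t s x q m ξ r : ℝ) : ℝ :=
  deriv (fun y => H t y x q m ξ r) s

noncomputable def bX (H : ℝ → ℝ → ℝ → ℝ → ℝ → ℝ → ℝ → ℝ) (t s x q m ξ r : ℝ) : ℝ :=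
  deriv (fun y => H t s y q m ξ r) x

noncomputable def bQ (H : ℝ → ℝ → ℝ → ℝ → ℝ → ℝ → ℝ → ℝ) (t s x q m ξ r : ℝ) : ℝ :=
  deriv (fun y => H t s x y m ξ r) q

noncomputable def bM (H : ℝ → ℝ → ℝ → ℝ → ℝ → ℝ → ℝ → ℝ) (t s x q m ξ r : ℝ) : ℝ :=
  deriv (fun y => H t s x q y ξ r) m

noncomputable def bXi (H : ℝ → ℝ → ℝ → ℝ → ℝ → ℝ → ℝ → ℝ) (t s x q m ξ r : ℝ) : ℝ :=
  deriv (fun y => H t s x q m y r) ξ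

noncomputable def bR (H : ℝ → ℝ → ℝ → ℝ → ℝ → ℝ → ℝ → ℝ) (t s x q m ξ r : ℝ) : ℝ :=
  deriv (fun y => H t s x q m ξ y) r

noncomputable def bSS (H : ℝ → ℝ → ℝ → ℝ → ℝ → ℝ → ℝ → ℝ) (t s x q m ξ r : ℝ) : ℝ :=
  deriv (fun y => bS H t y x q m ξ r) s

noncomputable def bMM (H : ℝ → ℝ → ℝ → ℝ → ℝ → ℝ → ℝ → ℝ) (t s x q m ξ r : ℝ) : ℝ :=
  deriv (fun y => bM H t s x q y ξ r) m

noncomputable def bXiXi (H : ℝ → ℝ → ℝ → ℝ → ℝ → ℝ → ℝ → ℝ) (t s x q m ξ r : ℝ) : ℝ :=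
  deriv (fun y => bXi H t s x q m y r) ξ

noncomputable def bSM (H : ℝ → ℝ → ℝ → ℝ → ℝ → ℝ → ℝ → ℝ) (t s x q m ξ r : ℝ) : ℝ :=
  deriv (fun y => bS H t s x q y ξ r) m

/-- The matrix `P₂`. -/
def P2mat (κα κU f₁ f₃ : ℝ) : Matrix (Fin 4) (Fin 4) ℝ :=
  !![0, 0, 0, 0; -f₁, -κα, 0, f₁; -1, 0, -κU, 0; -f₃, 0, 0, f₃]

/-- The symmetric matrix `P₅`. -/
noncomputable def P5mat (b cc ρ₀ ρ₁ Vt f₁ f₃ : ℝ) : Matrix (Fin 4) (Fin 4) ℝ :=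
  !![-ρ₀ - ρ₁ * Vt, 1 / 2, 0, 0;
     1 / 2, b * f₁ ^ 2, 0, b * f₁ * f₃;
     0, 0, cc, 0;
     0, b * f₁ * f₃, 0, b * f₃ ^ 2]

/-- The row vector `P₇ = (a - b f₂²)^{-1/2}·(p/2, b f₁ f₂, 0, b f₂ f₃)`. -/
noncomputable def P7vec (a b p f₁ f₂ f₃ : ℝ) : Fin 4 → ℝ :=
  (Real.sqrt (a - b * f₂ ^ 2))⁻¹ • ![p / 2, b * f₁ * f₂, 0, b * f₂ * f₃]

/-- The row vector `P₈ = (2√(a - b f₂²))⁻¹·(1 - f₂, 0, 0, f₂)`. -/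
noncomputable def P8vec (a b f₂ : ℝ) : Fin 4 → ℝ :=
  (2 * Real.sqrt (a - b * f₂ ^ 2))⁻¹ • ![1 - f₂, 0, 0, f₂]

/-- The matrix `P₉ = 2P₈ᵀP₇ + P₂ᵀ`. -/
noncomputable def P9mat (a b p κα κU f₁ f₂ f₃ : ℝ) : Matrix (Fin 4) (Fin 4) ℝ :=
  (2 : ℝ) • Matrix.vecMulVec (P8vec a b f₂) (P7vec a b p f₁ f₂ f₃)
    + (P2mat κα κU f₁ f₃)ᵀ

/-- Right-hand side of the broker's 4×4 matrix Riccati ODE,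
`G' = -P₇ᵀP₇ - 4GᵀP₈ᵀP₈G - GᵀP₉ - P₉ᵀG - P₅`. -/
noncomputable def brokerRiccatiRHS (a b p κα κU cc ρ₀ ρ₁ Vt f₁ f₂ f₃ : ℝ)
    (G : Matrix (Fin 4) (Fin 4) ℝ) : Matrix (Fin 4) (Fin 4) ℝ :=
  -(Matrix.vecMulVec (P7vec a b p f₁ f₂ f₃) (P7vec a b p f₁ f₂ f₃))
    - (4 : ℝ) • (Gᵀ * Matrix.vecMulVec (P8vec a b f₂) (P8vec a b f₂) * G)
    - Gᵀ * P9mat a b p κα κU f₁ f₂ f₃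
    - (P9mat a b p κα κU f₁ f₂ f₃)ᵀ * G
    - P5mat b cc ρ₀ ρ₁ Vt f₁ f₃

section QuadraticForms

variable {n : Type*} [Fintype n]

theorem HasDerivAt.dotProduct {u v : ℝ → n → ℝ} {u' v' : n → ℝ} {z : ℝ}
    (hu : HasDerivAt u u' z) (hv : HasDerivAt v v' z) :
    HasDerivAt (fun z => u z ⬝ᵥ v z) (u' ⬝ᵥ v z + u z ⬝ᵥ v') z := by
  show HasDerivAt (fun z => ∑ i, u z i * v z i) (∑ i, u' i * v z i + ∑ i, u z i * v' i) z
  rw [← Finset.sum_add_distrib]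
  exact HasDerivAt.fun_sum fun i _ =>
    ((hasDerivAt_pi.1 hu i).mul (hasDerivAt_pi.1 hv i)).congr_deriv (by ring)

theorem HasDerivAt.mulVec (M : Matrix n n ℝ) {u : ℝ → n → ℝ} {u' : n → ℝ} {z : ℝ}
    (hu : HasDerivAt u u' z) : HasDerivAt (fun z => M *ᵥ u z) (M *ᵥ u') z :=
  hasDerivAt_pi.2 fun i =>
    ((hasDerivAt_const z (M i)).dotProduct hu).congr_deriv (by rw [zero_dotProduct, zero_add]; rfl)

theorem HasDerivAt.dotProduct_mulVec_self [DecidableEq n] {M : Matrix n n ℝ} (hM : Mᵀ = M)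
    {u : ℝ → n → ℝ} {i : n} {z : ℝ} (hu : HasDerivAt u (Pi.single i 1) z) :
    HasDerivAt (fun z => u z ⬝ᵥ (M *ᵥ u z)) (2 * (M *ᵥ u z) i) z := by
  convert hu.dotProduct (hu.mulVec M) using 1
  rw [single_dotProduct, ← dotProduct_transpose_mulVec, hM, single_dotProduct]
  ring

theorem hasDerivWithinAt_dotProduct_mulVec {M : ℝ → Matrix n n ℝ} {M' : Matrix n n ℝ}
    {S : Set ℝ} {t : ℝ} (hM : ∀ i j, HasDerivWithinAt (fun τ => M τ i j) (M' i j) S t)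
    (u v : n → ℝ) :
    HasDerivWithinAt (fun τ => u ⬝ᵥ (M τ *ᵥ v)) (u ⬝ᵥ (M' *ᵥ v)) S t := by
  simp only [dotProduct, mulVec, Finset.mul_sum]
  exact HasDerivWithinAt.fun_sum fun i _ => HasDerivWithinAt.fun_sum fun j _ =>
    ((hM i j).mul_const (v j)).const_mul (u i)

theorem dotProduct_riccati_mulVec (u v y : n → ℝ) (P S G : Matrix n n ℝ) :
    y ⬝ᵥ ((-(vecMulVec u u) - (4 : ℝ) • (Gᵀ * vecMulVec v v * G)
        - Gᵀ * ((2 : ℝ) • vecMulVec v u + Pᵀ) - ((2 : ℝ) • vecMulVec v u + Pᵀ)ᵀ * G - S) *ᵥ y)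
      = -(u ⬝ᵥ y + 2 * (v ⬝ᵥ (G *ᵥ y))) ^ 2 - 2 * (y ⬝ᵥ (P *ᵥ (G *ᵥ y))) - y ⬝ᵥ (S *ᵥ y) := by
  simp only [sub_mulVec, neg_mulVec, smul_mulVec, add_mulVec, ← mulVec_mulVec, vecMulVec_mulVec,
    transpose_add, transpose_smul, transpose_transpose, dotProduct_transpose_mulVec,
    dotProduct_sub, dotProduct_neg, dotProduct_smul, dotProduct_add, op_smul_eq_smul, smul_eq_mul,
    transpose_vecMulVec, mulVec_add, mulVec_smul]
  rw [dotProduct_comm y u, dotProduct_comm (Pᵀ *ᵥ y), dotProduct_transpose_mulVec]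
  ring

theorem abs_dotProduct_mulVec_le (M : Matrix n n ℝ) (u v : n → ℝ) :
    |u ⬝ᵥ (M *ᵥ v)| ≤ (∑ i, ∑ j, |M i j|) * (‖u‖ * ‖v‖) :=
  calc |u ⬝ᵥ (M *ᵥ v)| = |∑ i, ∑ j, M i j * (u i * v j)| := by
        simp only [dotProduct, mulVec, Finset.mul_sum]
        congr 1; refine Finset.sum_congr rfl fun i _ => Finset.sum_congr rfl fun j _ => ?_; ring
    _ ≤ ∑ i, ∑ j, |M i j * (u i * v j)| :=
        (Finset.abs_sum_le_sum_abs _ _).trans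
          (Finset.sum_le_sum fun i _ => Finset.abs_sum_le_sum_abs _ _)
    _ ≤ ∑ i, ∑ j, |M i j| * (‖u‖ * ‖v‖) := by
        gcongr with i _ j _
        rw [abs_mul, abs_mul]
        gcongr
        exacts [norm_le_pi_norm u i, norm_le_pi_norm v j]
    _ = (∑ i, ∑ j, |M i j|) * (‖u‖ * ‖v‖) := by simp only [Finset.sum_mul]

end QuadraticForms

section VecCons

variable (q m ξ r : ℝ)

theorem hasDerivAt_vecCons_zero : HasDerivAt (fun z => ![z, m, ξ, r]) (Pi.single 0 1) q :=
  hasDerivAt_pi.2 fun j => by fin_cases j <;> simp [hasDerivAt_id', hasDerivAt_const]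

theorem hasDerivAt_vecCons_one : HasDerivAt (fun z => ![q, z, ξ, r]) (Pi.single 1 1) m :=
  hasDerivAt_pi.2 fun j => by fin_cases j <;> simp [hasDerivAt_id', hasDerivAt_const]

theorem hasDerivAt_vecCons_two : HasDerivAt (fun z => ![q, m, z, r]) (Pi.single 2 1) ξ :=
  hasDerivAt_pi.2 fun j => by fin_cases j <;> simp [hasDerivAt_id', hasDerivAt_const]

theorem hasDerivAt_vecCons_three : HasDerivAt (fun z => ![q, m, ξ, z]) (Pi.single 3 1) r :=
  hasDerivAt_pi.2 fun j => by fin_cases j <;> simp [hasDerivAt_id', hasDerivAt_const]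

end VecCons

noncomputable def brokerCandidate (G₀ : ℝ → ℝ) (G₂ : ℝ → Matrix (Fin 4) (Fin 4) ℝ)
    (t s x q m ξ r : ℝ) : ℝ :=
  x + q * s + G₀ t + ![q, m, ξ, r] ⬝ᵥ (G₂ t *ᵥ ![q, m, ξ, r])

section BrokerCandidate

variable {G₀ : ℝ → ℝ} {G₂ : ℝ → Matrix (Fin 4) (Fin 4) ℝ} {t s x q m ξ r : ℝ}

theorem bT_brokerCandidate {T g₀' : ℝ} {G₂' : Matrix (Fin 4) (Fin 4) ℝ} (hT : 0 < T)
    (ht : t ∈ Icc 0 T) (hG₀ : HasDerivWithinAt G₀ g₀' (Icc 0 T) t)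
    (hG₂ : ∀ i j, HasDerivWithinAt (fun τ => G₂ τ i j) (G₂' i j) (Icc 0 T) t) :
    bT T (brokerCandidate G₀ G₂) t s x q m ξ r
      = g₀' + ![q, m, ξ, r] ⬝ᵥ (G₂' *ᵥ ![q, m, ξ, r]) :=
  ((hG₀.const_add (x + q * s)).add (hasDerivWithinAt_dotProduct_mulVec hG₂ _ _)).derivWithin
    (uniqueDiffOn_Icc hT t ht)

theorem bS_brokerCandidate : bS (brokerCandidate G₀ G₂) t s x q m ξ r = q := by
  have h := ((((hasDerivAt_id s).const_mul q).const_add x).add_const (G₀ t)).add_const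
    (![q, m, ξ, r] ⬝ᵥ (G₂ t *ᵥ ![q, m, ξ, r]))
  exact h.deriv.trans (mul_one q)

theorem bX_brokerCandidate : bX (brokerCandidate G₀ G₂) t s x q m ξ r = 1 := by
  have h := (((hasDerivAt_id x).add_const (q * s)).add_const (G₀ t)).add_const
    (![q, m, ξ, r] ⬝ᵥ (G₂ t *ᵥ ![q, m, ξ, r]))
  exact h.deriv

theorem bSS_brokerCandidate : bSS (brokerCandidate G₀ G₂) t s x q m ξ r = 0 := by
  simp only [bSS, bS_brokerCandidate, deriv_const']

theorem bSM_brokerCandidate : bSM (brokerCandidate G₀ G₂) t s x q m ξ r = 0 := by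
  simp only [bSM, bS_brokerCandidate, deriv_const']

variable (hG : (G₂ t)ᵀ = G₂ t)
include hG

theorem bQ_brokerCandidate :
    bQ (brokerCandidate G₀ G₂) t s x q m ξ r = s + 2 * (G₂ t *ᵥ ![q, m, ξ, r]) 0 := by
  have h := ((((hasDerivAt_id q).mul_const s).const_add x).add_const (G₀ t)).add
    ((hasDerivAt_vecCons_zero q m ξ r).dotProduct_mulVec_self hG)
  exact h.deriv.trans (by rw [one_mul])

theorem bM_brokerCandidate :
    bM (brokerCandidate G₀ G₂) t s x q m ξ r = 2 * (G₂ t *ᵥ ![q, m, ξ, r]) 1 :=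
  (((hasDerivAt_vecCons_one q m ξ r).dotProduct_mulVec_self hG).const_add
    (x + q * s + G₀ t)).deriv

theorem bXi_brokerCandidate :
    bXi (brokerCandidate G₀ G₂) t s x q m ξ r = 2 * (G₂ t *ᵥ ![q, m, ξ, r]) 2 :=
  (((hasDerivAt_vecCons_two q m ξ r).dotProduct_mulVec_self hG).const_add
    (x + q * s + G₀ t)).deriv

theorem bR_brokerCandidate :
    bR (brokerCandidate G₀ G₂) t s x q m ξ r = 2 * (G₂ t *ᵥ ![q, m, ξ, r]) 3 :=
  (((hasDerivAt_vecCons_three q m ξ r).dotProduct_mulVec_self hG).const_add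
    (x + q * s + G₀ t)).deriv

theorem bMM_brokerCandidate : bMM (brokerCandidate G₀ G₂) t s x q m ξ r = 2 * G₂ t 1 1 := by
  simp only [bMM, bM_brokerCandidate hG]
  have h := (hasDerivAt_pi.1 ((hasDerivAt_vecCons_one q m ξ r).mulVec (G₂ t)) 1).const_mul 2
  rw [h.deriv, mulVec_single_one, col_apply]

theorem bXiXi_brokerCandidate :
    bXiXi (brokerCandidate G₀ G₂) t s x q m ξ r = 2 * G₂ t 2 2 := by
  simp only [bXiXi, bXi_brokerCandidate hG]
  have h := (hasDerivAt_pi.1 ((hasDerivAt_vecCons_two q m ξ r).mulVec (G₂ t)) 2).const_mul 2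
  rw [h.deriv, mulVec_single_one, col_apply]

end BrokerCandidate

theorem exists_abs_brokerCandidate_le {G₀ : ℝ → ℝ} {G₂ : ℝ → Matrix (Fin 4) (Fin 4) ℝ}
    {K : Set ℝ} (hK : IsCompact K) (hG₀ : ContinuousOn G₀ K)
    (hG₂ : ∀ i j, ContinuousOn (fun t => G₂ t i j) K) :
    ∃ C, ∀ t ∈ K, ∀ s x q m ξ r : ℝ,
      |brokerCandidate G₀ G₂ t s x q m ξ r| ≤ C * (1 + ‖(s, x, q, m, ξ, r)‖ ^ 2) := by
  obtain ⟨M, hM⟩ := hK.exists_bound_of_continuousOn (hG₀.abs.add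
    (continuousOn_finsetSum _ fun i _ => continuousOn_finsetSum _ fun j _ => (hG₂ i j).abs))
  refine ⟨M + 2, fun t ht s x q m ξ r => ?_⟩
  have hs : |s| ≤ ‖(s, x, q, m, ξ, r)‖ := by simp [Prod.norm_def]
  have hx : |x| ≤ ‖(s, x, q, m, ξ, r)‖ := by simp [Prod.norm_def]
  have hq : |q| ≤ ‖(s, x, q, m, ξ, r)‖ := by simp [Prod.norm_def]
  have hy : ‖![q, m, ξ, r]‖ ≤ ‖(s, x, q, m, ξ, r)‖ := by
    refine pi_norm_le_iff_of_nonneg (norm_nonneg _) |>.2 fun i => ?_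
    fin_cases i <;> simp [Prod.norm_def]
  set N := ‖(s, x, q, m, ξ, r)‖
  have hG : |G₀ t| + ∑ i, ∑ j, |G₂ t i j| ≤ M := (le_abs_self _).trans (hM t ht)
  have hQ := abs_dotProduct_mulVec_le (G₂ t) ![q, m, ξ, r] ![q, m, ξ, r]
  have hGsum : 0 ≤ ∑ i, ∑ j, |G₂ t i j| := by positivity
  calc |brokerCandidate G₀ G₂ t s x q m ξ r|
      ≤ |x| + |q| * |s| + |G₀ t| + |![q, m, ξ, r] ⬝ᵥ (G₂ t *ᵥ ![q, m, ξ, r])| := by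
        rw [← abs_mul]
        exact (abs_add_le _ _).trans (add_le_add_left (abs_add_three _ _ _) _)
    _ ≤ N + N * N + |G₀ t| + (∑ i, ∑ j, |G₂ t i j|) * (N * N) := by
        gcongr
        exact hQ.trans (by gcongr)
    _ ≤ (M + 2) * (1 + N ^ 2) := by
        nlinarith [sq_nonneg (N - 1), mul_nonneg (abs_nonneg (G₀ t)) (sq_nonneg N)]

theorem dotProduct_P2mat_mulVec (κα κU f₁ f₃ q m ξ r : ℝ) (g : Fin 4 → ℝ) :
    ![q, m, ξ, r] ⬝ᵥ (P2mat κα κU f₁ f₃ *ᵥ g)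
      = m * (-f₁ * g 0 - κα * g 1 + f₁ * g 3) + ξ * (-g 0 - κU * g 2)
        + r * (-f₃ * g 0 + f₃ * g 3) := by
  simp only [P2mat, dotProduct, mulVec, Fin.sum_univ_four, of_apply, cons_val', cons_val_zero,
    cons_val_one, cons_val, cons_val_fin_one]
  ring

theorem dotProduct_P5mat_mulVec (b cc ρ₀ ρ₁ Vt f₁ f₃ q m ξ r : ℝ) :
    ![q, m, ξ, r] ⬝ᵥ (P5mat b cc ρ₀ ρ₁ Vt f₁ f₃ *ᵥ ![q, m, ξ, r])
      = -(ρ₀ + ρ₁ * Vt) * q ^ 2 + q * m + b * (f₁ * m + f₃ * r) ^ 2 + cc * ξ ^ 2 := by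
  simp only [P5mat, dotProduct, mulVec, Fin.sum_univ_four, of_apply, cons_val', cons_val_zero,
    cons_val_one, cons_val, cons_val_fin_one]
  ring

theorem dotProduct_brokerRiccatiRHS_mulVec (a b p κα κU cc ρ₀ ρ₁ Vt f₁ f₂ f₃ : ℝ)
    (G : Matrix (Fin 4) (Fin 4) ℝ) (y : Fin 4 → ℝ) :
    y ⬝ᵥ (brokerRiccatiRHS a b p κα κU cc ρ₀ ρ₁ Vt f₁ f₂ f₃ G *ᵥ y)
      = -((P7vec a b p f₁ f₂ f₃ + (2 : ℝ) • vecMul (P8vec a b f₂) G) ⬝ᵥ y) ^ 2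
        - 2 * (y ⬝ᵥ (P2mat κα κU f₁ f₃ *ᵥ (G *ᵥ y))) - y ⬝ᵥ (P5mat b cc ρ₀ ρ₁ Vt f₁ f₃ *ᵥ y) := by
  rw [add_dotProduct, smul_dotProduct, ← dotProduct_mulVec, smul_eq_mul]
  exact dotProduct_riccati_mulVec _ _ _ _ _ _

theorem sqrt_mul_P7vec_add_P8vec_dotProduct {a b p f₁ f₂ f₃ : ℝ} (hA : 0 < a - b * f₂ ^ 2)
    (G : Matrix (Fin 4) (Fin 4) ℝ) (q m ξ r : ℝ) :
    √(a - b * f₂ ^ 2)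
        * ((P7vec a b p f₁ f₂ f₃ + (2 : ℝ) • vecMul (P8vec a b f₂) G) ⬝ᵥ ![q, m, ξ, r])
      = p / 2 * q + b * f₂ * (f₁ * m + f₃ * r)
        + (1 - f₂) * (G *ᵥ ![q, m, ξ, r]) 0 + f₂ * (G *ᵥ ![q, m, ξ, r]) 3 := by
  have hsA : √(a - b * f₂ ^ 2) ≠ 0 := (Real.sqrt_pos.2 hA).ne'
  rw [add_dotProduct, smul_dotProduct, ← dotProduct_mulVec]
  simp only [P7vec, P8vec, dotProduct, Fin.sum_univ_four, Pi.smul_apply, smul_eq_mul,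
    cons_val_zero, cons_val_one, cons_val]
  field_simp
  ring

theorem isGreatest_range_of_eq_sub_sq {F : ℝ → ℝ} {K α β : ℝ} (hα : α ≠ 0)
    (hF : ∀ ν, F ν = K - (α * ν - β) ^ 2) :
    IsGreatest (range F) (F (α⁻¹ * β)) ∧ (∀ ν, F ν = F (α⁻¹ * β) → ν = α⁻¹ * β)
      ∧ F (α⁻¹ * β) = K := by
  have hmax : F (α⁻¹ * β) = K := by rw [hF, mul_inv_cancel_left₀ hα, sub_self]; ring
  refine ⟨⟨mem_range_self _, ?_⟩, fun ν hν => ?_, hmax⟩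
  · rintro _ ⟨ν, rfl⟩
    rw [hF, hmax]
    nlinarith [sq_nonneg (α * ν - β)]
  · rw [hF, hmax, sub_eq_self, pow_eq_zero_iff two_ne_zero, sub_eq_zero] at hν
    rw [← hν, inv_mul_cancel_left₀ hα]

/-- The left side is the Hamiltonian of the HJB equation with `∂ₛH = q`, `∂ₓH = 1`,
`∂_qH = s + 2g₀`, `∂_rH = 2g₃` substituted. -/
theorem hamiltonian_eq_sub_sq {a b cc p f₁ f₂ f₃ s q m ξ r g₀ g₃ sA w : ℝ}
    (hA : sA ^ 2 = a - b * f₂ ^ 2)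
    (hw : sA * w = p / 2 * q + b * f₂ * (f₁ * m + f₃ * r) + (1 - f₂) * g₀ + f₂ * g₃) (ν : ℝ) :
    (p * ν + m) * q - ν * (s + a * ν) * 1
        + (f₁ * m + f₂ * ν + f₃ * r) * (s + b * (f₁ * m + f₂ * ν + f₃ * r)) * 1
        + ξ * (s + cc * ξ) * 1 + (ν - (f₁ * m + f₂ * ν + f₃ * r) - ξ) * (s + 2 * g₀)
        + (f₁ * m + f₂ * ν + f₃ * r) * (2 * g₃)
      = m * q + b * (f₁ * m + f₃ * r) ^ 2 + cc * ξ ^ 2 - 2 * (f₁ * m + f₃ * r + ξ) * g₀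
          + 2 * (f₁ * m + f₃ * r) * g₃ + w ^ 2 - (sA * ν - w) ^ 2 := by
  linear_combination (-2 * ν) * hw + ν ^ 2 * hA

theorem stmt_14_general (T a b cc p κα κU σS σα σU ρ ρ₀ ρ₁ β₀ β₁ : ℝ)
    (f₁ f₂ f₃ V : ℝ → ℝ)
    (hpos : ∀ t ∈ Icc (0 : ℝ) T, 0 < a - b * (f₂ t) ^ 2)
    (G₂ : ℝ → Matrix (Fin 4) (Fin 4) ℝ)
    (hG₂symm : ∀ t ∈ Icc (0 : ℝ) T, (G₂ t)ᵀ = G₂ t)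
    (hG₂ode : ∀ t ∈ Icc (0 : ℝ) T, ∀ i j,
      HasDerivWithinAt (fun τ => G₂ τ i j)
        ((brokerRiccatiRHS a b p κα κU cc ρ₀ ρ₁ (V t) (f₁ t) (f₂ t) (f₃ t) (G₂ t)) i j)
        (Icc 0 T) t)
    (hG₂T : G₂ T = Matrix.diagonal ![-(β₀ + β₁ * V T), 0, 0, 0])
    (G₀ : ℝ → ℝ)
    (hG₀ode : ∀ t ∈ Icc (0 : ℝ) T,
      HasDerivWithinAt G₀
        (-(((V t + ρ * σS * σα) / σS) ^ 2 * G₂ t 1 1) - σU ^ 2 * G₂ t 2 2)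
        (Icc 0 T) t)
    (hG₀T : G₀ T = 0)
    (H : ℝ → ℝ → ℝ → ℝ → ℝ → ℝ → ℝ → ℝ)
    (hH : ∀ t s x q m ξ r, H t s x q m ξ r =
      x + q * s + G₀ t + (![q, m, ξ, r]) ⬝ᵥ (G₂ t *ᵥ ![q, m, ξ, r])) :
    (∀ t ∈ Ico (0 : ℝ) T, ∀ s x q m ξ r : ℝ,
      IsGreatest
        (Set.range fun ν : ℝ =>
          (p * ν + m) * bS H t s x q m ξ r
            - ν * (s + a * ν) * bX H t s x q m ξ r
            + (f₁ t * m + f₂ t * ν + f₃ t * r)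
                * (s + b * (f₁ t * m + f₂ t * ν + f₃ t * r)) * bX H t s x q m ξ r
            + ξ * (s + cc * ξ) * bX H t s x q m ξ r
            + (ν - (f₁ t * m + f₂ t * ν + f₃ t * r) - ξ) * bQ H t s x q m ξ r
            + (f₁ t * m + f₂ t * ν + f₃ t * r) * bR H t s x q m ξ r)
        ((fun ν : ℝ =>
          (p * ν + m) * bS H t s x q m ξ r
            - ν * (s + a * ν) * bX H t s x q m ξ r
            + (f₁ t * m + f₂ t * ν + f₃ t * r)
                * (s + b * (f₁ t * m + f₂ t * ν + f₃ t * r)) * bX H t s x q m ξ r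
            + ξ * (s + cc * ξ) * bX H t s x q m ξ r
            + (ν - (f₁ t * m + f₂ t * ν + f₃ t * r) - ξ) * bQ H t s x q m ξ r
            + (f₁ t * m + f₂ t * ν + f₃ t * r) * bR H t s x q m ξ r)
          ((Real.sqrt (a - b * (f₂ t) ^ 2))⁻¹
            * ((P7vec a b p (f₁ t) (f₂ t) (f₃ t)
                + (2 : ℝ) • Matrix.vecMul (P8vec a b (f₂ t)) (G₂ t)) ⬝ᵥ ![q, m, ξ, r]))) ∧
      (∀ ν : ℝ,
        (fun ν : ℝ =>
          (p * ν + m) * bS H t s x q m ξ r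
            - ν * (s + a * ν) * bX H t s x q m ξ r
            + (f₁ t * m + f₂ t * ν + f₃ t * r)
                * (s + b * (f₁ t * m + f₂ t * ν + f₃ t * r)) * bX H t s x q m ξ r
            + ξ * (s + cc * ξ) * bX H t s x q m ξ r
            + (ν - (f₁ t * m + f₂ t * ν + f₃ t * r) - ξ) * bQ H t s x q m ξ r
            + (f₁ t * m + f₂ t * ν + f₃ t * r) * bR H t s x q m ξ r) ν =
        (fun ν : ℝ =>
          (p * ν + m) * bS H t s x q m ξ r
            - ν * (s + a * ν) * bX H t s x q m ξ r
            + (f₁ t * m + f₂ t * ν + f₃ t * r)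
                * (s + b * (f₁ t * m + f₂ t * ν + f₃ t * r)) * bX H t s x q m ξ r
            + ξ * (s + cc * ξ) * bX H t s x q m ξ r
            + (ν - (f₁ t * m + f₂ t * ν + f₃ t * r) - ξ) * bQ H t s x q m ξ r
            + (f₁ t * m + f₂ t * ν + f₃ t * r) * bR H t s x q m ξ r)
          ((Real.sqrt (a - b * (f₂ t) ^ 2))⁻¹
            * ((P7vec a b p (f₁ t) (f₂ t) (f₃ t)
                + (2 : ℝ) • Matrix.vecMul (P8vec a b (f₂ t)) (G₂ t)) ⬝ᵥ ![q, m, ξ, r])) →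
        ν = (Real.sqrt (a - b * (f₂ t) ^ 2))⁻¹
          * ((P7vec a b p (f₁ t) (f₂ t) (f₃ t)
              + (2 : ℝ) • Matrix.vecMul (P8vec a b (f₂ t)) (G₂ t)) ⬝ᵥ ![q, m, ξ, r])) ∧
      0 = bT T H t s x q m ξ r
          + (fun ν : ℝ =>
            (p * ν + m) * bS H t s x q m ξ r
              - ν * (s + a * ν) * bX H t s x q m ξ r
              + (f₁ t * m + f₂ t * ν + f₃ t * r)
                  * (s + b * (f₁ t * m + f₂ t * ν + f₃ t * r)) * bX H t s x q m ξ r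
              + ξ * (s + cc * ξ) * bX H t s x q m ξ r
              + (ν - (f₁ t * m + f₂ t * ν + f₃ t * r) - ξ) * bQ H t s x q m ξ r
              + (f₁ t * m + f₂ t * ν + f₃ t * r) * bR H t s x q m ξ r)
            ((Real.sqrt (a - b * (f₂ t) ^ 2))⁻¹
              * ((P7vec a b p (f₁ t) (f₂ t) (f₃ t)
                  + (2 : ℝ) • Matrix.vecMul (P8vec a b (f₂ t)) (G₂ t)) ⬝ᵥ ![q, m, ξ, r]))
          - κα * m * bM H t s x q m ξ r
          - κU * ξ * bXi H t s x q m ξ r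
          + σS ^ 2 / 2 * bSS H t s x q m ξ r
          + ((V t + ρ * σS * σα) / σS) ^ 2 / 2 * bMM H t s x q m ξ r
          + σU ^ 2 / 2 * bXiXi H t s x q m ξ r
          + (V t + ρ * σS * σα) * bSM H t s x q m ξ r
          - (ρ₀ + ρ₁ * V t) * q ^ 2) ∧
    (∀ s x q m ξ r : ℝ, H T s x q m ξ r = x + q * s - (β₀ + β₁ * V T) * q ^ 2) ∧
    (∃ C : ℝ, ∀ t ∈ Icc (0 : ℝ) T, ∀ s x q m ξ r : ℝ,
      |H t s x q m ξ r| ≤ C * (1 + ‖(s, x, q, m, ξ, r)‖ ^ 2)) := by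
  obtain rfl : H = brokerCandidate G₀ G₂ := by
    funext t s x q m ξ r
    exact hH t s x q m ξ r
  refine ⟨fun t ht s x q m ξ r => ?_, fun s x q m ξ r => ?_, ?_⟩
  · have htI : t ∈ Icc 0 T := Ico_subset_Icc_self ht
    have hA := hpos t htI
    have hG := hG₂symm t htI
    rw [bS_brokerCandidate, bX_brokerCandidate, bQ_brokerCandidate hG, bR_brokerCandidate hG]
    obtain ⟨hmax, huniq, hval⟩ := isGreatest_range_of_eq_sub_sq (Real.sqrt_pos.2 hA).ne'
      (hamiltonian_eq_sub_sq (Real.sq_sqrt hA.le)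
        (sqrt_mul_P7vec_add_P8vec_dotProduct hA (G₂ t) q m ξ r))
    refine ⟨hmax, huniq, ?_⟩
    beta_reduce
    rw [hval, bT_brokerCandidate (ht.1.trans_lt ht.2) htI (hG₀ode t htI) (hG₂ode t htI),
      dotProduct_brokerRiccatiRHS_mulVec, dotProduct_P2mat_mulVec, dotProduct_P5mat_mulVec,
      bM_brokerCandidate hG, bXi_brokerCandidate hG, bMM_brokerCandidate hG,
      bXiXi_brokerCandidate hG, bSS_brokerCandidate, bSM_brokerCandidate]
    ring
  · rw [brokerCandidate, hG₀T, hG₂T]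
    simp only [dotProduct, mulVec_diagonal, Fin.sum_univ_four, cons_val_zero, cons_val_one,
      cons_val]
    ring
  · exact exists_abs_brokerCandidate_le isCompact_Icc
      (fun t ht => (hG₀ode t ht).continuousWithinAt)
      fun i j t ht => (hG₂ode t ht i j).continuousWithinAt

/-- The candidate value function of the broker,
`H(t,s,x,q,m,ξ,r) = x + qs + G₀(t) + ỹ G₂(t) ỹᵀ` with `ỹ = (q,m,ξ,r)`, solves
the broker's HJB equation on `[0,T)×ℝ⁶` (the supremum over `ν ∈ ℝ` being finite
and attained uniquely at `ν* = (a - b f₂²)^{-1/2}(P₇ + 2P₈G₂)ỹᵀ`), matches the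
terminal condition, and has quadratic growth uniformly in time. -/
theorem stmt_14 (T a b cc p κα κU σS σα σU ρ ρ₀ ρ₁ β₀ β₁ : ℝ)
    (hT : 0 < T) (ha : 0 < a) (hb : 0 < b) (hcc : 0 < cc) (hp : 0 ≤ p)
    (hκα : 0 ≤ κα) (hκU : 0 < κU) (hσS : 0 < σS) (hσα : 0 < σα) (hσU : 0 < σU)
    (hρ : ρ ∈ Icc (-1 : ℝ) 1)
    (hρ₀ : 0 < ρ₀) (hρ₁ : 0 < ρ₁) (hβ₀ : 0 < β₀) (hβ₁ : 0 < β₁)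
    (f₁ f₂ f₃ V : ℝ → ℝ)
    (hf₁ : ContinuousOn f₁ (Icc 0 T)) (hf₂ : ContinuousOn f₂ (Icc 0 T))
    (hf₃ : ContinuousOn f₃ (Icc 0 T)) (hV : ContinuousOn V (Icc 0 T))
    (hVnn : ∀ t ∈ Icc (0 : ℝ) T, 0 ≤ V t)
    (hpos : ∀ t ∈ Icc (0 : ℝ) T, 0 < a - b * (f₂ t) ^ 2)
    (G₂ : ℝ → Matrix (Fin 4) (Fin 4) ℝ)
    (hG₂C : ∀ i j, ContDiffOn ℝ 1 (fun t => G₂ t i j) (Icc 0 T))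
    (hG₂symm : ∀ t ∈ Icc (0 : ℝ) T, (G₂ t)ᵀ = G₂ t)
    (hG₂ode : ∀ t ∈ Icc (0 : ℝ) T, ∀ i j,
      HasDerivWithinAt (fun τ => G₂ τ i j)
        ((brokerRiccatiRHS a b p κα κU cc ρ₀ ρ₁ (V t) (f₁ t) (f₂ t) (f₃ t) (G₂ t)) i j)
        (Icc 0 T) t)
    (hG₂T : G₂ T = Matrix.diagonal ![-(β₀ + β₁ * V T), 0, 0, 0])
    (G₀ : ℝ → ℝ) (hG₀C : ContDiffOn ℝ 1 G₀ (Icc 0 T))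
    (hG₀ode : ∀ t ∈ Icc (0 : ℝ) T,
      HasDerivWithinAt G₀
        (-(((V t + ρ * σS * σα) / σS) ^ 2 * G₂ t 1 1) - σU ^ 2 * G₂ t 2 2)
        (Icc 0 T) t)
    (hG₀T : G₀ T = 0)
    (H : ℝ → ℝ → ℝ → ℝ → ℝ → ℝ → ℝ → ℝ)
    (hH : ∀ t s x q m ξ r, H t s x q m ξ r =
      x + q * s + G₀ t + (![q, m, ξ, r]) ⬝ᵥ (G₂ t *ᵥ ![q, m, ξ, r])) :
    (∀ t ∈ Ico (0 : ℝ) T, ∀ s x q m ξ r : ℝ,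
      IsGreatest
        (Set.range fun ν : ℝ =>
          (p * ν + m) * bS H t s x q m ξ r
            - ν * (s + a * ν) * bX H t s x q m ξ r
            + (f₁ t * m + f₂ t * ν + f₃ t * r)
                * (s + b * (f₁ t * m + f₂ t * ν + f₃ t * r)) * bX H t s x q m ξ r
            + ξ * (s + cc * ξ) * bX H t s x q m ξ r
            + (ν - (f₁ t * m + f₂ t * ν + f₃ t * r) - ξ) * bQ H t s x q m ξ r
            + (f₁ t * m + f₂ t * ν + f₃ t * r) * bR H t s x q m ξ r)
        ((fun ν : ℝ =>
          (p * ν + m) * bS H t s x q m ξ r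
            - ν * (s + a * ν) * bX H t s x q m ξ r
            + (f₁ t * m + f₂ t * ν + f₃ t * r)
                * (s + b * (f₁ t * m + f₂ t * ν + f₃ t * r)) * bX H t s x q m ξ r
            + ξ * (s + cc * ξ) * bX H t s x q m ξ r
            + (ν - (f₁ t * m + f₂ t * ν + f₃ t * r) - ξ) * bQ H t s x q m ξ r
            + (f₁ t * m + f₂ t * ν + f₃ t * r) * bR H t s x q m ξ r)
          ((Real.sqrt (a - b * (f₂ t) ^ 2))⁻¹
            * ((P7vec a b p (f₁ t) (f₂ t) (f₃ t)
                + (2 : ℝ) • Matrix.vecMul (P8vec a b (f₂ t)) (G₂ t)) ⬝ᵥ ![q, m, ξ, r]))) ∧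
      (∀ ν : ℝ,
        (fun ν : ℝ =>
          (p * ν + m) * bS H t s x q m ξ r
            - ν * (s + a * ν) * bX H t s x q m ξ r
            + (f₁ t * m + f₂ t * ν + f₃ t * r)
                * (s + b * (f₁ t * m + f₂ t * ν + f₃ t * r)) * bX H t s x q m ξ r
            + ξ * (s + cc * ξ) * bX H t s x q m ξ r
            + (ν - (f₁ t * m + f₂ t * ν + f₃ t * r) - ξ) * bQ H t s x q m ξ r
            + (f₁ t * m + f₂ t * ν + f₃ t * r) * bR H t s x q m ξ r) ν =
        (fun ν : ℝ =>
          (p * ν + m) * bS H t s x q m ξ r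
            - ν * (s + a * ν) * bX H t s x q m ξ r
            + (f₁ t * m + f₂ t * ν + f₃ t * r)
                * (s + b * (f₁ t * m + f₂ t * ν + f₃ t * r)) * bX H t s x q m ξ r
            + ξ * (s + cc * ξ) * bX H t s x q m ξ r
            + (ν - (f₁ t * m + f₂ t * ν + f₃ t * r) - ξ) * bQ H t s x q m ξ r
            + (f₁ t * m + f₂ t * ν + f₃ t * r) * bR H t s x q m ξ r)
          ((Real.sqrt (a - b * (f₂ t) ^ 2))⁻¹
            * ((P7vec a b p (f₁ t) (f₂ t) (f₃ t)
                + (2 : ℝ) • Matrix.vecMul (P8vec a b (f₂ t)) (G₂ t)) ⬝ᵥ ![q, m, ξ, r])) →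
        ν = (Real.sqrt (a - b * (f₂ t) ^ 2))⁻¹
          * ((P7vec a b p (f₁ t) (f₂ t) (f₃ t)
              + (2 : ℝ) • Matrix.vecMul (P8vec a b (f₂ t)) (G₂ t)) ⬝ᵥ ![q, m, ξ, r])) ∧
      0 = bT T H t s x q m ξ r
          + (fun ν : ℝ =>
            (p * ν + m) * bS H t s x q m ξ r
              - ν * (s + a * ν) * bX H t s x q m ξ r
              + (f₁ t * m + f₂ t * ν + f₃ t * r)
                  * (s + b * (f₁ t * m + f₂ t * ν + f₃ t * r)) * bX H t s x q m ξ r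
              + ξ * (s + cc * ξ) * bX H t s x q m ξ r
              + (ν - (f₁ t * m + f₂ t * ν + f₃ t * r) - ξ) * bQ H t s x q m ξ r
              + (f₁ t * m + f₂ t * ν + f₃ t * r) * bR H t s x q m ξ r)
            ((Real.sqrt (a - b * (f₂ t) ^ 2))⁻¹
              * ((P7vec a b p (f₁ t) (f₂ t) (f₃ t)
                  + (2 : ℝ) • Matrix.vecMul (P8vec a b (f₂ t)) (G₂ t)) ⬝ᵥ ![q, m, ξ, r]))
          - κα * m * bM H t s x q m ξ r
          - κU * ξ * bXi H t s x q m ξ r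
          + σS ^ 2 / 2 * bSS H t s x q m ξ r
          + ((V t + ρ * σS * σα) / σS) ^ 2 / 2 * bMM H t s x q m ξ r
          + σU ^ 2 / 2 * bXiXi H t s x q m ξ r
          + (V t + ρ * σS * σα) * bSM H t s x q m ξ r
          - (ρ₀ + ρ₁ * V t) * q ^ 2) ∧
    (∀ s x q m ξ r : ℝ, H T s x q m ξ r = x + q * s - (β₀ + β₁ * V T) * q ^ 2) ∧
    (∃ C : ℝ, ∀ t ∈ Icc (0 : ℝ) T, ∀ s x q m ξ r : ℝ,
      |H t s x q m ξ r| ≤ C * (1 + ‖(s, x, q, m, ξ, r)‖ ^ 2)) :=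
  stmt_14_general T a b cc p κα κU σS σα σU ρ ρ₀ ρ₁ β₀ β₁ f₁ f₂ f₃ V hpos G₂ hG₂symm hG₂ode hG₂T G₀
    hG₀ode hG₀T H hH
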